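/- (Appendix Lemma 2.) Let n ≥ 1 and let a_1, …, a_n be integers with a_i ≥ 2 for all i. Then gcd(q′ + 1, q) = gcd(p − 1, q) and gcd(q′ − 1, q) = gcd(p + 1, q). In particular, (q′+1)/q is a reduced fraction if and only if (p−1)/q is, and (q′−1)/q is reduced if and only if (p+1)/q is. -/

import Mathlib

/- One step of the recursion for the numerators/denominators of negative continued
fractions: the state `(x, y)` holds the two previous values `(V(b_1,…,b_{k-1}), V(b_1,…,b_k))`
(with the conventions `P() = 1`, `P(before empty) = 0`, `Q() = 0`, `Q(before empty) = -1`),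
and a new entry `b` updates it to `(y, b * y - x)`, implementing
`V(b_1,…,b_{k+1}) = b_{k+1} · V(b_1,…,b_k) − V(b_1,…,b_{k-1})`. -/
def cfStep (s : ℤ × ℤ) (b : ℤ) : ℤ × ℤ := (s.2, b * s.2 - s.1)

/-- `cfP [b_1,…,b_m] = P(b_1,…,b_m)`: the numerator of the negative continued fraction
`[b_1,…,b_m]`, defined by `P() = 1`, `P(b_1) = b_1`,
`P(b_1,…,b_k) = b_k · P(b_1,…,b_{k-1}) − P(b_1,…,b_{k-2})`. -/
def cfP (l : List ℤ) : ℤ := (l.foldl cfStep (0, 1)).2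

/-- `cfQ [b_1,…,b_m] = Q(b_1,…,b_m)`: the denominator of the negative continued fraction
`[b_1,…,b_m]`, defined by `Q() = 0`, `Q(b_1) = 1`,
`Q(b_1,…,b_k) = b_k · Q(b_1,…,b_{k-1}) − Q(b_1,…,b_{k-2})`. -/
def cfQ (l : List ℤ) : ℤ := (l.foldl cfStep (-1, 0)).2

/-- The list `[a 1, a 2, …, a m]`. -/
def cfList (a : ℕ → ℤ) (m : ℕ) : List ℤ := (List.range m).map fun i => a (i + 1)

/- The matrix with rows `(P(l), P(l'))` and `(Q(l), Q(l'))`, where `l'` drops the last entry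
of `l`, is a product of matrices of determinant one, so `p q' - p' q = -1`. Hence `p` is a unit
modulo `q`, and multiplying by it carries `q' + 1` to `p - 1` and `q' - 1` to
`-(p + 1)` modulo `q`. -/

lemma foldl_cfStep_det (l : List ℤ) (s t : ℤ × ℤ) :
    (l.foldl cfStep s).2 * (l.foldl cfStep t).1 - (l.foldl cfStep s).1 * (l.foldl cfStep t).2
      = s.2 * t.1 - s.1 * t.2 := by
  induction l generalizing s t with
  | nil => rfl
  | cons b l ih =>
      rw [List.foldl_cons, List.foldl_cons, ih]
      simp only [cfStep]
      ring

lemma foldl_cfStep_append_singleton_fst (l : List ℤ) (b : ℤ) (s : ℤ × ℤ) :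
    ((l ++ [b]).foldl cfStep s).1 = (l.foldl cfStep s).2 := by
  simp [List.foldl_append, cfStep]

lemma cfP_append_singleton_mul_cfQ_sub (l : List ℤ) (b : ℤ) :
    cfP (l ++ [b]) * cfQ l - cfP l * cfQ (l ++ [b]) = -1 := by
  unfold cfP cfQ
  rw [← foldl_cfStep_append_singleton_fst l b, ← foldl_cfStep_append_singleton_fst l b]
  simpa using foldl_cfStep_det (l ++ [b]) (0, 1) (-1, 0)

lemma cfList_succ (a : ℕ → ℤ) (m : ℕ) : cfList a (m + 1) = cfList a m ++ [a (m + 1)] := by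
  simp [cfList, List.range_succ]

lemma Int.gcd_add_one_eq_gcd_sub_one_of_mul_sub_mul {p q r s : ℤ} (h : p * r - s * q = -1) :
    Int.gcd (r + 1) q = Int.gcd (p - 1) q := by
  have hpq : Int.gcd p q = 1 := Int.isCoprime_iff_gcd_eq_one.mp ⟨-r, s, by linear_combination -h⟩
  calc Int.gcd (r + 1) q = Int.gcd (p * (r + 1)) q :=
        (Int.gcd_mul_right_left_of_gcd_eq_one hpq).symm
    _ = Int.gcd (p * (r + 1) - s * q) q := (Int.gcd_sub_mul_right_left q _ s).symm
    _ = Int.gcd (p - 1) q := by congr 1; linear_combination h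

lemma Int.gcd_sub_one_eq_gcd_add_one_of_mul_sub_mul {p q r s : ℤ} (h : p * r - s * q = -1) :
    Int.gcd (r - 1) q = Int.gcd (p + 1) q := by
  have hneg := Int.gcd_add_one_eq_gcd_sub_one_of_mul_sub_mul (p := -p) (q := q) (r := -r) (s := s)
    (by linear_combination h)
  rwa [show -r + 1 = -(r - 1) by ring, show -p - 1 = -(p + 1) by ring,
    Int.neg_gcd, Int.neg_gcd] at hneg

theorem cf_appendix_lemma2_general (n : ℕ) (hn : 1 ≤ n) (a : ℕ → ℤ) :
    Int.gcd (cfQ (cfList a (n - 1)) + 1) (cfQ (cfList a n))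
        = Int.gcd (cfP (cfList a n) - 1) (cfQ (cfList a n)) ∧
    Int.gcd (cfQ (cfList a (n - 1)) - 1) (cfQ (cfList a n))
        = Int.gcd (cfP (cfList a n) + 1) (cfQ (cfList a n)) ∧
    (Int.gcd (cfQ (cfList a (n - 1)) + 1) (cfQ (cfList a n)) = 1 ↔
      Int.gcd (cfP (cfList a n) - 1) (cfQ (cfList a n)) = 1) ∧
    (Int.gcd (cfQ (cfList a (n - 1)) - 1) (cfQ (cfList a n)) = 1 ↔
      Int.gcd (cfP (cfList a n) + 1) (cfQ (cfList a n)) = 1) := by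
  obtain ⟨m, rfl⟩ : ∃ m, n = m + 1 := ⟨n - 1, by omega⟩
  rw [Nat.add_sub_cancel, cfList_succ]
  have hdet := cfP_append_singleton_mul_cfQ_sub (cfList a m) (a (m + 1))
  have hplus := Int.gcd_add_one_eq_gcd_sub_one_of_mul_sub_mul hdet
  have hminus := Int.gcd_sub_one_eq_gcd_add_one_of_mul_sub_mul hdet
  exact ⟨hplus, hminus, by rw [hplus], by rw [hminus]⟩

/-- Appendix Lemma 2: `gcd (q' + 1) q = gcd (p - 1) q` and
`gcd (q' - 1) q = gcd (p + 1) q`; in particular the corresponding fractions are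
simultaneously reduced. -/
theorem cf_appendix_lemma2 (n : ℕ) (hn : 1 ≤ n) (a : ℕ → ℤ)
    (ha : ∀ i, 1 ≤ i → i ≤ n → 2 ≤ a i) :
    Int.gcd (cfQ (cfList a (n - 1)) + 1) (cfQ (cfList a n))
        = Int.gcd (cfP (cfList a n) - 1) (cfQ (cfList a n)) ∧
    Int.gcd (cfQ (cfList a (n - 1)) - 1) (cfQ (cfList a n))
        = Int.gcd (cfP (cfList a n) + 1) (cfQ (cfList a n)) ∧
    (Int.gcd (cfQ (cfList a (n - 1)) + 1) (cfQ (cfList a n)) = 1 ↔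
      Int.gcd (cfP (cfList a n) - 1) (cfQ (cfList a n)) = 1) ∧
    (Int.gcd (cfQ (cfList a (n - 1)) - 1) (cfQ (cfList a n)) = 1 ↔
      Int.gcd (cfP (cfList a n) + 1) (cfQ (cfList a n)) = 1) :=
  cf_appendix_lemma2_general n hn a
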